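/- Let F be a class of measurable functions from a measurable space E to [−1,1], separable in the product topology, and let N = n + m ≥ 2. For z = (z_1,…,z_N) ∈ E^N define v_+(z) = sup_{f∈F} Σ_{i=1}^{N} ( f(z_i) − (1/N) Σ_{j=1}^{N} f(z_j) )². Then the function v_+/4 : E^N → ℝ is (2,0)-self-bounding. -/

import Mathlib

open MeasureTheory

/-- A function `f : E^N → ℝ` is `(a,b)`-self-bounding if for every coordinate `i` there is a
function `gᵢ` not depending on the `i`-th coordinate such that `0 ≤ f x − gᵢ x ≤ 1` for all `x`
and `∑ i (f x − gᵢ x) ≤ a f x + b`. -/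
def SelfBounding {E : Type*} {N : ℕ} (a b : ℝ) (f : (Fin N → E) → ℝ) : Prop :=
  ∃ g : Fin N → (Fin N → E) → ℝ,
    (∀ i, ∀ x y : Fin N → E, (∀ j, j ≠ i → x j = y j) → g i x = g i y) ∧
    (∀ i, ∀ x, 0 ≤ f x - g i x ∧ f x - g i x ≤ 1) ∧
    (∀ x, ∑ i, (f x - g i x) ≤ a * f x + b)

/-!
Writing the centred sum of squares of `a : Fin N → ℝ` as `(2N)⁻¹ ∑ₖ ∑ₗ (aₖ - aₗ)²`, the natural
`gᵢ` drops the `i`-th row and column of this double sum. What is dropped is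
`(2N)⁻¹ · 2 ∑ₗ (aᵢ - aₗ)² ≤ 4` when the `aₖ` lie in `[-1, 1]`, and summed over `i` it is twice the
whole; so each `f ∈ F` alone gives a `(2,0)`-self-bounding function after dividing by `4`.
Taking suprema preserves `(a,b)`-self-boundedness as long as `a ≤ N`: use `⨆ f, gᵢ^f` as `gᵢ`.
-/

open Finset

namespace Finset

variable {ι : Type*} (s : Finset ι) (a : ι → ℝ)

noncomputable def pairSqSum : ℝ := ∑ k ∈ s, ∑ l ∈ s, (a k - a l) ^ 2

theorem sum_sq_sub_mean_eq :
    ∑ i ∈ s, (a i - (1 / (#s : ℝ)) * ∑ j ∈ s, a j) ^ 2 = (1 / (2 * #s)) * pairSqSum s a := by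
  rcases s.eq_empty_or_nonempty with rfl | hs
  · simp [pairSqSum]
  have hcard : (#s : ℝ) ≠ 0 := by exact_mod_cast hs.card_pos.ne'
  have hpair : pairSqSum s a = 2 * #s * ∑ k ∈ s, a k ^ 2 - 2 * (∑ k ∈ s, a k) ^ 2 := by
    simp only [pairSqSum, sub_sq, sum_add_distrib, sum_sub_distrib, sum_const, nsmul_eq_mul,
      ← mul_sum, ← sum_mul]
    ring
  simp only [sub_sq, sum_add_distrib, sum_sub_distrib, sum_const, nsmul_eq_mul, mul_pow,
    ← mul_sum, ← sum_mul, hpair]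
  field_simp
  ring

theorem pairSqSum_le_card_mul {c : ℝ} (h : ∀ k ∈ s, ∀ l ∈ s, (a k - a l) ^ 2 ≤ c) :
    pairSqSum s a ≤ #s * (#s * c) := by
  simpa [pairSqSum] using sum_le_card_nsmul s _ _ fun k hk => sum_le_card_nsmul s _ c (h k hk)

variable [DecidableEq ι]

theorem pairSqSum_eq_erase_add {i : ι} (hi : i ∈ s) :
    pairSqSum s a = pairSqSum (s.erase i) a + 2 * ∑ l ∈ s, (a i - a l) ^ 2 := by
  have hcol : ∑ k ∈ s.erase i, (a k - a i) ^ 2 = ∑ l ∈ s, (a i - a l) ^ 2 := by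
    rw [sum_erase _ (by simp)]
    exact sum_congr rfl fun l _ => by ring
  have hrow : ∀ k ∈ s.erase i, ∑ l ∈ s, (a k - a l) ^ 2
      = ∑ l ∈ s.erase i, (a k - a l) ^ 2 + (a k - a i) ^ 2 :=
    fun k _ => (sum_erase_add _ _ hi).symm
  rw [pairSqSum, ← sum_erase_add _ _ hi, sum_congr rfl hrow, sum_add_distrib, hcol, pairSqSum]
  ring

theorem sum_pairSqSum_sub_erase :
    ∑ i ∈ s, (pairSqSum s a - pairSqSum (s.erase i) a) = 2 * pairSqSum s a := by
  conv_rhs => rw [pairSqSum, mul_sum]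
  refine sum_congr rfl fun i hi => ?_
  rw [pairSqSum_eq_erase_add s a hi]
  ring

end Finset

theorem sq_sub_le_four {x y : ℝ} (hx : x ∈ Set.Icc (-1) 1) (hy : y ∈ Set.Icc (-1) 1) :
    (x - y) ^ 2 ≤ 4 := by
  obtain ⟨hx₁, hx₂⟩ := hx; obtain ⟨hy₁, hy₂⟩ := hy; nlinarith

theorem Fin.sum_sq_sub_mean_eq {N : ℕ} (a : Fin N → ℝ) :
    ∑ i, (a i - (1 / (N : ℝ)) * ∑ j, a j) ^ 2 = (1 / (2 * N)) * pairSqSum univ a := by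
  simpa using Finset.sum_sq_sub_mean_eq univ a

theorem selfBounding_zero {E : Type*} {N : ℕ} (a : ℝ) {b : ℝ} (hb : 0 ≤ b) :
    SelfBounding (E := E) (N := N) a b fun _ => 0 :=
  ⟨fun _ _ => 0, fun _ _ _ _ => rfl, fun _ _ => by norm_num, fun _ => by simpa using hb⟩

theorem SelfBounding.iSup {E ι : Type*} {N : ℕ} {a b : ℝ} (ha : a ≤ N) (hb : 0 ≤ b)
    {q : ι → (Fin N → E) → ℝ} (hq : ∀ k, SelfBounding a b (q k))
    (hbdd : ∀ x, BddAbove (Set.range fun k => q k x)) :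
    SelfBounding a b fun x => ⨆ k, q k x := by
  rcases isEmpty_or_nonempty ι with hι | hι
  · simpa only [Real.iSup_of_isEmpty] using selfBounding_zero a hb
  choose g hg_indep hg_bound hg_sum using hq
  have hg_le : ∀ k i x, g k i x ≤ ⨆ k, q k x := fun k i x =>
    (sub_nonneg.1 (hg_bound k i x).1).trans (le_ciSup (hbdd x) k)
  have hg_bdd : ∀ i x, BddAbove (Set.range fun k => g k i x) := fun i x =>
    ⟨_, Set.forall_mem_range.2 fun k => hg_le k i x⟩
  refine ⟨fun i x => ⨆ k, g k i x, fun i x y hxy => iSup_congr fun k => hg_indep k i x y hxy,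
    fun i x => ⟨sub_nonneg.2 (ciSup_le fun k => hg_le k i x), ?_⟩, fun x => ?_⟩
  · refine sub_le_iff_le_add'.2 (ciSup_le fun k => ?_)
    have := (hg_bound k i x).2
    linarith [le_ciSup (hg_bdd i x) k]
  · have hsup : (N - a) * ⨆ k, q k x ≤ (∑ i, ⨆ k, g k i x) + b := by
      rw [Real.mul_iSup_of_nonneg (sub_nonneg.2 ha)]
      refine ciSup_le fun k => ?_
      have hk := hg_sum k x
      have hle : ∑ i, g k i x ≤ ∑ i, ⨆ k, g k i x :=
        sum_le_sum fun i _ => le_ciSup (hg_bdd i x) k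
      rw [sum_sub_distrib, sum_const, card_fin, nsmul_eq_mul] at hk
      linarith [sub_mul (N : ℝ) a (q k x)]
    dsimp only
    rw [sum_sub_distrib, sum_const, card_fin, nsmul_eq_mul]
    linarith [sub_mul (N : ℝ) a (⨆ k, q k x)]

theorem selfBounding_sum_sq_sub_mean {E : Type*} {N : ℕ} {h : E → ℝ}
    (hh : ∀ e, h e ∈ Set.Icc (-1 : ℝ) 1) :
    SelfBounding 2 0 fun z : Fin N → E =>
      (∑ i, (h (z i) - (1 / (N : ℝ)) * ∑ j, h (z j)) ^ 2) / 4 := by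
  have hvar : ∀ z : Fin N → E, (∑ i, (h (z i) - (1 / (N : ℝ)) * ∑ j, h (z j)) ^ 2) / 4
      = pairSqSum univ (fun k => h (z k)) / (8 * N) := fun z => by
    rw [Fin.sum_sq_sub_mean_eq fun k => h (z k)]
    ring
  simp_rw [hvar]
  refine ⟨fun i z => pairSqSum (univ.erase i) (fun k => h (z k)) / (8 * N), fun i x y hxy => ?_,
    fun i z => ?_, fun z => ?_⟩
  · simp only [pairSqSum]
    refine congrArg (· / _) (sum_congr rfl fun k hk => sum_congr rfl fun l hl => ?_)
    rw [hxy k (ne_of_mem_erase hk), hxy l (ne_of_mem_erase hl)]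
  · have hrow : ∑ l, (h (z i) - h (z l)) ^ 2 ≤ N * 4 := by
      simpa using sum_le_card_nsmul univ _ 4 fun l _ => sq_sub_le_four (hh (z i)) (hh (z l))
    rw [← sub_div, pairSqSum_eq_erase_add _ _ (mem_univ i), add_sub_cancel_left]
    exact ⟨by positivity, div_le_one_of_le₀ (by linarith) (by positivity)⟩
  · dsimp only
    simp_rw [← sub_div, ← sum_div, sum_pairSqSum_sub_erase]
    exact le_of_eq (by ring)

theorem bddAbove_range_sum_sq_sub_mean {E : Type*} {N : ℕ} (F : Set (E → ℝ))
    (hF : ∀ f ∈ F, ∀ e, f e ∈ Set.Icc (-1 : ℝ) 1) (z : Fin N → E) :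
    BddAbove (Set.range fun f : F =>
      (∑ i, ((f : E → ℝ) (z i) - (1 / (N : ℝ)) * ∑ j, (f : E → ℝ) (z j)) ^ 2) / 4) := by
  refine ⟨N / 2, Set.forall_mem_range.2 fun f => ?_⟩
  have hpair := pairSqSum_le_card_mul (univ : Finset (Fin N)) (fun k => (f : E → ℝ) (z k))
    (c := 4) fun k _ l _ => sq_sub_le_four (hF f f.2 (z k)) (hF f f.2 (z l))
  rw [card_fin] at hpair
  rw [Fin.sum_sq_sub_mean_eq fun k => (f : E → ℝ) (z k)]
  calc 1 / (2 * N) * pairSqSum univ (fun k => (f : E → ℝ) (z k)) / 4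
      ≤ 1 / (2 * N) * (N * (N * 4)) / 4 := by gcongr
    _ = N / 2 := by
      rcases eq_or_ne (N : ℝ) 0 with hN | hN
      · simp [hN]
      · field_simp

theorem weak_variance_selfBounding_general
    {E : Type*} {N : ℕ} (hN : 2 ≤ N)
    (F : Set (E → ℝ))
    (hFrange : ∀ f ∈ F, ∀ e, f e ∈ Set.Icc (-1 : ℝ) 1) :
    SelfBounding 2 0 (fun z : Fin N → E =>
      (⨆ f : F, ∑ i, ((f : E → ℝ) (z i) - (1 / (N : ℝ)) * ∑ j, (f : E → ℝ) (z j)) ^ 2) / 4) := by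
  have hscale : ∀ z : Fin N → E,
      (⨆ f : F, ∑ i, ((f : E → ℝ) (z i) - (1 / (N : ℝ)) * ∑ j, (f : E → ℝ) (z j)) ^ 2) / 4
        = ⨆ f : F, (∑ i, ((f : E → ℝ) (z i) - (1 / (N : ℝ)) * ∑ j, (f : E → ℝ) (z j)) ^ 2) / 4 :=
    fun z => by simp only [div_eq_mul_inv, Real.iSup_mul_of_nonneg (by norm_num : (0 : ℝ) ≤ 4⁻¹)]
  simp_rw [hscale]
  exact SelfBounding.iSup (by exact_mod_cast hN) le_rfl
    (fun f => selfBounding_sum_sq_sub_mean (hFrange f f.2))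
    (bddAbove_range_sum_sq_sub_mean F hFrange)

/-- **The weak empirical variance is self-bounding** (Lemma SM.11). For a class `F` of
measurable `[-1,1]`-valued functions, separable in the product topology, and `N ≥ 2`, the
function `v₊/4` with `v₊(z) = sup_{f∈F} ∑ᵢ (f(zᵢ) − N⁻¹ ∑ⱼ f(zⱼ))²` is `(2,0)`-self-bounding. -/
theorem weak_variance_selfBounding
    {E : Type*} [MeasurableSpace E] {N : ℕ} (hN : 2 ≤ N)
    (F : Set (E → ℝ))
    (hFmeas : ∀ f ∈ F, Measurable f)
    (hFrange : ∀ f ∈ F, ∀ e, f e ∈ Set.Icc (-1 : ℝ) 1)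
    (hFsep : TopologicalSpace.IsSeparable F) :
    SelfBounding 2 0 (fun z : Fin N → E =>
      (⨆ f : F, ∑ i, ((f : E → ℝ) (z i) - (1 / (N : ℝ)) * ∑ j, (f : E → ℝ) (z j)) ^ 2) / 4) :=
  weak_variance_selfBounding_general hN F hFrange
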